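/- Each assignment problem has a unique Rawlsian assignment: if x and y are both assignments that are not R-dominated by any other assignment, then x = y. -/

import Mathlib

open Finset

/-- An n×n matrix with nonnegative real entries whose rows and columns each sum to 1. -/
def Bistochastic {n : ℕ} (x : Fin n → Fin n → ℝ) : Prop :=
  (∀ i o, 0 ≤ x i o) ∧ (∀ i, ∑ o, x i o = 1) ∧ (∀ o, ∑ i, x i o = 1)

/-- `tailProb rank x i k` = probability that agent `i` receives an object ranked `k`-th
or worse (ranks are 0-indexed: rank 0 = most preferred). -/
def tailProb {n : ℕ} (rank : Fin n → Fin n → Fin n) (x : Fin n → Fin n → ℝ)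
    (i k : Fin n) : ℝ :=
  ∑ o ∈ Finset.univ.filter (fun o => k ≤ rank i o), x i o

/-- The values of `v` rearranged in non-increasing order. -/
noncomputable def sortedDesc {n : ℕ} (v : Fin n → ℝ) : Fin n → ℝ :=
  fun j => v (Tuple.sort (fun i => -v i) j)

/-- Block `t` of `Bvec rank x` is the non-increasing rearrangement of the tail
probabilities at threshold `n-1-t`; so blocks run from the worst rank down. -/
noncomputable def Bvec {n : ℕ} (rank : Fin n → Fin n → Fin n) (x : Fin n → Fin n → ℝ) :
    Fin n → Fin n → ℝ :=
  fun t => sortedDesc (fun i => tailProb rank x i t.rev)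

/-- Lexicographic strict order on doubly-indexed vectors (outer index first). -/
def BlockLexLt {α β : Type*} [LinearOrder α] [LinearOrder β] (u v : α → β → ℝ) : Prop :=
  ∃ t s, u t s < v t s ∧ ∀ t' s', (t' < t ∨ (t' = t ∧ s' < s)) → u t' s' = v t' s'

/-- `x` Rawlsian-dominates `y`. -/
def RDom {n : ℕ} (rank : Fin n → Fin n → Fin n) (x y : Fin n → Fin n → ℝ) : Prop :=
  BlockLexLt (Bvec rank x) (Bvec rank y)

/-- A Rawlsian assignment: a bistochastic matrix not R-dominated by any other. -/
def Rawlsian {n : ℕ} (rank : Fin n → Fin n → Fin n) (x : Fin n → Fin n → ℝ) : Prop :=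
  Bistochastic x ∧ ∀ y, Bistochastic y → ¬ RDom rank y x

lemma sortedDesc_antitone {n : ℕ} (v : Fin n → ℝ) : Antitone (sortedDesc v) := by
  intro j j' h
  have := Tuple.monotone_sort (fun i => -v i) h
  simpa [sortedDesc] using this

/-- the first `s` indices of `Fin n` -/
def Js (n s : ℕ) : Finset (Fin n) := univ.filter (fun j => (j : ℕ) < s)

lemma card_Js {n s : ℕ} (h : s ≤ n) : (Js n s).card = s := by
  have : Js n s = (univ : Finset (Fin s)).map (Fin.castLEEmb h) := by
    ext i
    simp only [Js, mem_filter, mem_univ, true_and, mem_map]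
    constructor
    · intro hi; exact ⟨⟨i, hi⟩, rfl⟩
    · rintro ⟨j, rfl⟩; exact j.2
  rw [this, card_map, card_univ, Fintype.card_fin]

lemma sum_antitone_le {n : ℕ} (w : Fin n → ℝ) (hw : Antitone w) (T : Finset (Fin n)) :
    ∑ j ∈ T, w j ≤ ∑ j ∈ Js n T.card, w j := by
  classical
  set J := Js n T.card with hJ
  have hTn : T.card ≤ n := by simpa using card_le_card (subset_univ T)
  have hJcard : J.card = T.card := card_Js hTn
  have hsplitT : ∑ j ∈ T, w j = ∑ j ∈ T ∩ J, w j + ∑ j ∈ T \ J, w j := by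
    exact (sum_inter_add_sum_sdiff T J w).symm
  have hsplitJ : ∑ j ∈ J, w j = ∑ j ∈ T ∩ J, w j + ∑ j ∈ J \ T, w j := by
    rw [inter_comm]; exact (sum_inter_add_sum_sdiff J T w).symm
  have hcardA : (T \ J).card = (J \ T).card := by
    have h1 : (T \ J).card = T.card - (T ∩ J).card := card_sdiff_add_card_inter T J ▸ by
      omega
    have h2 : (J \ T).card = J.card - (J ∩ T).card := card_sdiff_add_card_inter J T ▸ by
      omega
    rw [h1, h2, hJcard, inter_comm]
  rw [hsplitT, hsplitJ]
  gcongr ?_ + ?_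
  · exact le_refl _
  rcases (T \ J).eq_empty_or_nonempty with hA | hA
  · have hB : (J \ T) = ∅ := card_eq_zero.mp (by rw [← hcardA, hA, card_empty])
    simp [hA, hB]
  · set m := (T \ J).min' hA with hm
    have hmA : m ∈ T \ J := min'_mem _ hA
    have hmub : T.card ≤ (m : ℕ) := by
      have := (mem_sdiff.mp hmA).2
      simp only [hJ, Js, mem_filter, mem_univ, true_and, not_lt] at this
      exact this
    have h1 : ∑ j ∈ T \ J, w j ≤ (T \ J).card • w m := by
      apply sum_le_card_nsmul
      intro j hj
      exact hw (min'_le _ j hj)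
    have h2 : (J \ T).card • w m ≤ ∑ j ∈ J \ T, w j := by
      apply card_nsmul_le_sum
      intro j hj
      apply hw
      have hjJ := (mem_sdiff.mp hj).1
      simp only [hJ, Js, mem_filter, mem_univ, true_and] at hjJ
      have : (j : ℕ) ≤ (m : ℕ) := by omega
      exact this
    calc ∑ j ∈ T \ J, w j ≤ (T \ J).card • w m := h1
      _ = (J \ T).card • w m := by rw [hcardA]
      _ ≤ ∑ j ∈ J \ T, w j := h2

lemma sum_le_topSum {n : ℕ} (v : Fin n → ℝ) (S : Finset (Fin n)) :
    ∑ i ∈ S, v i ≤ ∑ j ∈ Js n S.card, sortedDesc v j := by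
  set σ := Tuple.sort (fun i => -v i) with hσ
  have key : ∑ i ∈ S, v i = ∑ j ∈ S.map σ.symm.toEmbedding, sortedDesc v j := by
    rw [sum_map]
    exact sum_congr rfl (fun i _ => by simp [sortedDesc, hσ])
  rw [key]
  have := sum_antitone_le (sortedDesc v) (sortedDesc_antitone v) (S.map σ.symm.toEmbedding)
  rwa [card_map] at this

lemma sum_sortedDesc_Js {n : ℕ} (v : Fin n → ℝ) (s : ℕ) :
    ∃ S : Finset (Fin n), S.card = (Js n s).card ∧
      ∑ j ∈ Js n s, sortedDesc v j = ∑ i ∈ S, v i := by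
  classical
  set σ := Tuple.sort (fun i => -v i) with hσ
  refine ⟨(Js n s).image σ, card_image_of_injective _ σ.injective, ?_⟩
  rw [Finset.sum_image (fun a _ b _ h => σ.injective h)]
  rfl

lemma Js_card_self {n s : ℕ} : Js n ((Js n s).card) = Js n s := by
  rcases le_or_gt s n with h | h
  · rw [card_Js h]
  · have huniv : Js n s = univ := by
      ext j; simp only [Js, mem_filter, mem_univ, true_and, iff_true]; omega
    have hn : Js n n = univ := by
      ext j; simp only [Js, mem_filter, mem_univ, true_and, iff_true]; exact j.2
    rw [huniv, card_univ, Fintype.card_fin, hn]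

lemma topSum_avg {n : ℕ} (a b : Fin n → ℝ) (s : ℕ) :
    ∑ j ∈ Js n s, sortedDesc (fun i => (a i + b i) / 2) j ≤
      (∑ j ∈ Js n s, sortedDesc a j + ∑ j ∈ Js n s, sortedDesc b j) / 2 := by
  obtain ⟨S, hcard, hsum⟩ := sum_sortedDesc_Js (fun i => (a i + b i) / 2) s
  rw [hsum]
  have hsplit : ∑ i ∈ S, (a i + b i) / 2 = (∑ i ∈ S, a i + ∑ i ∈ S, b i) / 2 := by
    rw [← sum_div, sum_add_distrib]
  have hJ : Js n S.card = Js n s := by rw [hcard]; exact Js_card_self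
  have ha := sum_le_topSum a S
  have hb := sum_le_topSum b S
  rw [hJ] at ha hb
  rw [hsplit]
  linarith

lemma blockLexLt_total {n : ℕ} (u v : Fin n → Fin n → ℝ) (h : u ≠ v) :
    BlockLexLt u v ∨ BlockLexLt v u := by
  classical
  have hT : (univ.filter (fun t : Fin n => u t ≠ v t)).Nonempty := by
    by_contra hc
    rw [not_nonempty_iff_eq_empty, filter_eq_empty_iff] at hc
    exact h (funext fun t => not_not.mp (hc (mem_univ t)))
  set t0 := (univ.filter (fun t : Fin n => u t ≠ v t)).min' hT with ht0def
  have ht0 : u t0 ≠ v t0 := (mem_filter.mp ((univ.filter (fun t : Fin n => u t ≠ v t)).min'_mem hT)).2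
  have hS : (univ.filter (fun s : Fin n => u t0 s ≠ v t0 s)).Nonempty := by
    by_contra hc
    rw [not_nonempty_iff_eq_empty, filter_eq_empty_iff] at hc
    exact ht0 (funext fun s => not_not.mp (hc (mem_univ s)))
  set s0 := (univ.filter (fun s : Fin n => u t0 s ≠ v t0 s)).min' hS with hs0def
  have hs0 : u t0 s0 ≠ v t0 s0 :=
    (mem_filter.mp ((univ.filter (fun s : Fin n => u t0 s ≠ v t0 s)).min'_mem hS)).2
  have hmin_t : ∀ t' : Fin n, t' < t0 → u t' = v t' := by
    intro t' h'
    by_contra hne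
    exact absurd (min'_le _ t' (mem_filter.mpr ⟨mem_univ t', hne⟩)) (not_le.mpr h')
  have hmin_s : ∀ s' : Fin n, s' < s0 → u t0 s' = v t0 s' := by
    intro s' h'
    by_contra hne
    exact absurd (min'_le _ s' (mem_filter.mpr ⟨mem_univ s', hne⟩)) (not_le.mpr h')
  have hside : ∀ t' s' : Fin n, (t' < t0 ∨ (t' = t0 ∧ s' < s0)) → u t' s' = v t' s' := by
    rintro t' s' (h' | ⟨rfl, h'⟩)
    · exact congrFun (hmin_t t' h') s'
    · exact hmin_s s' h'
  rcases lt_trichotomy (u t0 s0) (v t0 s0) with hlt | heq | hgt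
  · exact Or.inl ⟨t0, s0, hlt, hside⟩
  · exact absurd heq hs0
  · exact Or.inr ⟨t0, s0, hgt, fun t' s' h' => (hside t' s' h').symm⟩

lemma Js_succ {n : ℕ} (s : Fin n) :
    Js n ((s : ℕ) + 1) = insert s (Js n (s : ℕ)) := by
  ext j
  simp only [Js, mem_filter, mem_univ, true_and, mem_insert]
  constructor
  · intro hj
    rcases eq_or_lt_of_le (Nat.lt_succ_iff.mp hj) with h | h
    · exact Or.inl (Fin.ext h)
    · exact Or.inr h
  · rintro (rfl | hj) <;> omega

lemma sum_sq_sortedDesc {n : ℕ} (v : Fin n → ℝ) :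
    ∑ j, (sortedDesc v j) ^ 2 = ∑ i, (v i) ^ 2 :=
  Equiv.sum_comp (Tuple.sort (fun i => -v i)) (fun i => (v i) ^ 2)

/-- Each assignment problem has a unique Rawlsian assignment. -/
theorem rawlsian_unique {n : ℕ} (rank : Fin n → Fin n → Fin n)
    (hrank : ∀ i, Function.Bijective (rank i))
    (x y : Fin n → Fin n → ℝ) (hx : Rawlsian rank x) (hy : Rawlsian rank y) :
    x = y := by
  classical
  -- Step 1: the B-vectors of x and y agree.
  have hBxy : Bvec rank x = Bvec rank y := by
    by_contra h
    rcases blockLexLt_total _ _ h with h1 | h1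
    · exact hy.2 x hx.1 h1
    · exact hx.2 y hy.1 h1
  -- Step 2: the midpoint assignment.
  set z : Fin n → Fin n → ℝ := fun i o => (x i o + y i o) / 2 with hzdef
  have hz : Bistochastic z := by
    refine ⟨fun i o => div_nonneg (add_nonneg (hx.1.1 i o) (hy.1.1 i o)) (by norm_num),
      fun i => ?_, fun o => ?_⟩
    · show ∑ o, (x i o + y i o) / 2 = 1
      rw [← sum_div, sum_add_distrib, hx.1.2.1 i, hy.1.2.1 i]; norm_num
    · show ∑ i, (x i o + y i o) / 2 = 1
      rw [← sum_div, sum_add_distrib, hx.1.2.2 o, hy.1.2.2 o]; norm_num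
  -- tail probabilities of z are averages
  have htz : ∀ i k, tailProb rank z i k = (tailProb rank x i k + tailProb rank y i k) / 2 := by
    intro i k
    show ∑ o ∈ univ.filter (fun o => k ≤ rank i o), (x i o + y i o) / 2 = _
    rw [tailProb, tailProb, ← sum_div, sum_add_distrib]
  have hBz : ∀ t : Fin n, Bvec rank z t =
      sortedDesc (fun i => (tailProb rank x i t.rev + tailProb rank y i t.rev) / 2) := by
    intro t
    show sortedDesc (fun i => tailProb rank z i t.rev) = _
    exact congrArg sortedDesc (funext fun i => htz i t.rev)
  -- partial sums of blocks of z are dominated by those of x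
  have hps : ∀ (t : Fin n) (s : ℕ),
      ∑ j ∈ Js n s, Bvec rank z t j ≤ ∑ j ∈ Js n s, Bvec rank x t j := by
    intro t s
    have h2 := topSum_avg (fun i => tailProb rank x i t.rev)
      (fun i => tailProb rank y i t.rev) s
    have hxy : ∑ j ∈ Js n s, sortedDesc (fun i => tailProb rank y i t.rev) j
        = ∑ j ∈ Js n s, sortedDesc (fun i => tailProb rank x i t.rev) j := by
      have : Bvec rank y t = Bvec rank x t := (congrFun hBxy t).symm
      exact sum_congr rfl (fun j _ => congrFun this j)
    rw [hxy] at h2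
    calc ∑ j ∈ Js n s, Bvec rank z t j
        = ∑ j ∈ Js n s, sortedDesc
            (fun i => (tailProb rank x i t.rev + tailProb rank y i t.rev) / 2) j :=
          sum_congr rfl (fun j _ => congrFun (hBz t) j)
      _ ≤ _ := by
          have hrx : ∑ j ∈ Js n s, sortedDesc (fun i => tailProb rank x i t.rev) j
              = ∑ j ∈ Js n s, Bvec rank x t j := rfl
          linarith
  -- Step 3: case on whether Bvec z = Bvec x
  by_cases hc : Bvec rank z = Bvec rank x
  · -- equal case: tail probabilities of x and y coincide
    have htp : ∀ (k : Fin n) (i : Fin n), tailProb rank x i k = tailProb rank y i k := by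
      intro k
      set t := k.rev with htdef
      have hkt : t.rev = k := Fin.rev_rev k
      set tx : Fin n → ℝ := fun i => tailProb rank x i k with htxdef
      set ty : Fin n → ℝ := fun i => tailProb rank y i k with htydef
      have hsx : ∑ j, (Bvec rank x t j) ^ 2 = ∑ i, (tx i) ^ 2 := by
        rw [show Bvec rank x t = sortedDesc (fun i => tailProb rank x i t.rev) from rfl, hkt]
        exact sum_sq_sortedDesc _
      have hsy : ∑ j, (Bvec rank y t j) ^ 2 = ∑ i, (ty i) ^ 2 := by
        rw [show Bvec rank y t = sortedDesc (fun i => tailProb rank y i t.rev) from rfl, hkt]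
        exact sum_sq_sortedDesc _
      have hsz : ∑ j, (Bvec rank z t j) ^ 2 = ∑ i, ((tx i + ty i) / 2) ^ 2 := by
        rw [show Bvec rank z t = sortedDesc (fun i => tailProb rank z i t.rev) from rfl]
        rw [show (fun i => tailProb rank z i t.rev) = fun i => (tx i + ty i) / 2 by
          funext i; rw [hkt]; exact htz i k]
        exact sum_sq_sortedDesc _
      have e1 : ∑ i, (ty i) ^ 2 = ∑ i, (tx i) ^ 2 := by
        rw [← hsx, ← hsy, hBxy]
      have e2 : ∑ i, ((tx i + ty i) / 2) ^ 2 = ∑ i, (tx i) ^ 2 := by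
        rw [← hsx, ← hsz, hc]
      have hzero : ∑ i, (tx i - ty i) ^ 2 = 0 := by
        have expand : ∀ i : Fin n, (tx i - ty i) ^ 2
            = 2 * (tx i) ^ 2 + 2 * (ty i) ^ 2 - 4 * ((tx i + ty i) / 2) ^ 2 := by
          intro i; ring
        rw [sum_congr rfl (fun i _ => expand i)]
        rw [sum_sub_distrib, sum_add_distrib, ← mul_sum, ← mul_sum, ← mul_sum]
        rw [e1, e2]; ring
      intro i
      have := (sum_eq_zero_iff_of_nonneg (fun i _ => sq_nonneg (tx i - ty i))).mp hzero
        i (mem_univ i)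
      have := pow_eq_zero_iff (two_ne_zero) |>.mp this
      have : tx i = ty i := by linarith [sub_eq_zero.mp this]
      exact this
    -- Step 4: recover x = y from equality of all tail probabilities
    funext i o
    set F : (Fin n → Fin n → ℝ) → ℕ → ℝ :=
      fun w m => ∑ o' ∈ univ.filter (fun o' => m ≤ ((rank i o' : Fin n) : ℕ)), w i o'
      with hFdef
    have hF : ∀ m, F x m = F y m := by
      intro m
      rcases lt_or_ge m n with hm | hm
      · have hfilt : univ.filter (fun o' => m ≤ ((rank i o' : Fin n) : ℕ))
            = univ.filter (fun o' => (⟨m, hm⟩ : Fin n) ≤ rank i o') := by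
          ext o'; simp [Fin.le_def]
        show (∑ o' ∈ _, x i o') = ∑ o' ∈ _, y i o'
        rw [hfilt]
        exact htp ⟨m, hm⟩ i
      · have hfilt : univ.filter (fun o' => m ≤ ((rank i o' : Fin n) : ℕ)) = ∅ := by
          rw [filter_eq_empty_iff]
          intro o' _
          have := (rank i o').2
          omega
        show (∑ o' ∈ _, x i o') = ∑ o' ∈ _, y i o'
        rw [hfilt]
        simp
    have hsplit : ∀ w : Fin n → Fin n → ℝ,
        F w ((rank i o : Fin n) : ℕ) = w i o + F w (((rank i o : Fin n) : ℕ) + 1) := by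
      intro w
      have hins : univ.filter (fun o' => ((rank i o : Fin n) : ℕ) ≤ ((rank i o' : Fin n) : ℕ))
          = insert o (univ.filter
              (fun o' => ((rank i o : Fin n) : ℕ) + 1 ≤ ((rank i o' : Fin n) : ℕ))) := by
        ext o'
        simp only [mem_filter, mem_univ, true_and, mem_insert]
        constructor
        · intro h
          rcases eq_or_lt_of_le h with h' | h'
          · exact Or.inl ((hrank i).1 (Fin.ext h'.symm))
          · exact Or.inr h'
        · rintro (rfl | h) <;> omega
      have hnot : o ∉ univ.filter
          (fun o' => ((rank i o : Fin n) : ℕ) + 1 ≤ ((rank i o' : Fin n) : ℕ)) := by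
        simp
      show (∑ o' ∈ _, w i o') = w i o + ∑ o' ∈ _, w i o'
      rw [hins, sum_insert hnot]
    have h1 := hsplit x
    have h2 := hsplit y
    have h3 := hF ((rank i o : Fin n) : ℕ)
    have h4 := hF (((rank i o : Fin n) : ℕ) + 1)
    linarith
  · -- unequal case: z R-dominates x, contradiction
    exfalso
    have hT : (univ.filter (fun t : Fin n => Bvec rank z t ≠ Bvec rank x t)).Nonempty := by
      by_contra hcc
      rw [not_nonempty_iff_eq_empty, filter_eq_empty_iff] at hcc
      exact hc (funext fun t => not_not.mp (hcc (mem_univ t)))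
    set t0 := (univ.filter (fun t : Fin n => Bvec rank z t ≠ Bvec rank x t)).min' hT with ht0def
    have ht0 : Bvec rank z t0 ≠ Bvec rank x t0 :=
      (mem_filter.mp (min'_mem _ hT)).2
    have hS : (univ.filter (fun s : Fin n => Bvec rank z t0 s ≠ Bvec rank x t0 s)).Nonempty := by
      by_contra hcc
      rw [not_nonempty_iff_eq_empty, filter_eq_empty_iff] at hcc
      exact ht0 (funext fun s => not_not.mp (hcc (mem_univ s)))
    set s0 := (univ.filter (fun s : Fin n => Bvec rank z t0 s ≠ Bvec rank x t0 s)).min' hS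
      with hs0def
    have hs0 : Bvec rank z t0 s0 ≠ Bvec rank x t0 s0 :=
      (mem_filter.mp (min'_mem _ hS)).2
    have hmin_t : ∀ t' : Fin n, t' < t0 → Bvec rank z t' = Bvec rank x t' := by
      intro t' h'
      by_contra hne
      exact absurd (min'_le _ t' (mem_filter.mpr ⟨mem_univ t', hne⟩)) (not_le.mpr h')
    have hmin_s : ∀ s' : Fin n, s' < s0 → Bvec rank z t0 s' = Bvec rank x t0 s' := by
      intro s' h'
      by_contra hne
      exact absurd (min'_le _ s' (mem_filter.mpr ⟨mem_univ s', hne⟩)) (not_le.mpr h')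
    have hlt : Bvec rank z t0 s0 < Bvec rank x t0 s0 := by
      have hsum := hps t0 ((s0 : ℕ) + 1)
      rw [Js_succ s0, sum_insert (by simp [Js]), sum_insert (by simp [Js])] at hsum
      have heqs : ∑ j ∈ Js n (s0 : ℕ), Bvec rank z t0 j
          = ∑ j ∈ Js n (s0 : ℕ), Bvec rank x t0 j := by
        apply sum_congr rfl
        intro j hj
        have : (j : ℕ) < (s0 : ℕ) := by
          simpa [Js] using hj
        exact hmin_s j this
      have hle : Bvec rank z t0 s0 ≤ Bvec rank x t0 s0 := by linarith
      exact lt_of_le_of_ne hle hs0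
    exact hx.2 z hz ⟨t0, s0, hlt, by
      rintro t' s' (h' | ⟨rfl, h'⟩)
      · exact congrFun (hmin_t t' h') s'
      · exact hmin_s s' h'⟩
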